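/- Let q > 0 be real, set η = arccosh((q + q⁻¹ + 1)/2) > 0, and define the 9×9 real matrix P₀ by (q + q⁻¹ + 1)·P₀ = q⁻¹·E₁₁⊗E₃₃ + q^{−1/2}·E₁₂⊗E₃₂ + E₁₃⊗E₃₁ + q^{−1/2}·E₂₁⊗E₂₃ + E₂₂⊗E₂₂ + q^{1/2}·E₂₃⊗E₂₁ + E₃₁⊗E₁₃ + q^{1/2}·E₃₂⊗E₁₂ + q·E₃₃⊗E₁₁, where E_{ij} are 3×3 elementary matrices and ⊗ is the Kronecker product. For real θ with θ ≠ −η define R̂(θ) = I₉ + (sinh(η−θ)/sinh(η+θ) − 1)·P₀. Then for all real θ, θ′ with θ ≠ −η, θ′ ≠ −η and θ+θ′ ≠ −η, the Baxterized braid equation holds: R̂₁₂(θ)·R̂₂₃(θ+θ′)·R̂₁₂(θ′) = R̂₂₃(θ′)·R̂₁₂(θ+θ′)·R̂₂₃(θ), where for a 9×9 matrix A one sets A₁₂ = A ⊗ I₃ and A₂₃ = I₃ ⊗ A (27×27 Kronecker products). -/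

import Mathlib

open Matrix Kronecker

/-- `3×3` elementary matrix with a single `1` at position `(i,j)`. -/
noncomputable def e3 (i j : Fin 3) : Matrix (Fin 3) (Fin 3) ℝ :=
  Matrix.single i j 1

/-- The rank-one projector `P₀` of the new class of `SO_q(3)` braid matrices:
`(q + q⁻¹ + 1) P₀ = q⁻¹ E₁₁⊗E₃₃ + q^{-1/2} E₁₂⊗E₃₂ + E₁₃⊗E₃₁ + q^{-1/2} E₂₁⊗E₂₃
 + E₂₂⊗E₂₂ + q^{1/2} E₂₃⊗E₂₁ + E₃₁⊗E₁₃ + q^{1/2} E₃₂⊗E₁₂ + q E₃₃⊗E₁₁`. -/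
noncomputable def P0so3 (q : ℝ) : Matrix (Fin 3 × Fin 3) (Fin 3 × Fin 3) ℝ :=
  (q + q⁻¹ + 1)⁻¹ •
    (q⁻¹ • (e3 0 0 ⊗ₖ e3 2 2) + (Real.sqrt q)⁻¹ • (e3 0 1 ⊗ₖ e3 2 1)
      + e3 0 2 ⊗ₖ e3 2 0
      + (Real.sqrt q)⁻¹ • (e3 1 0 ⊗ₖ e3 1 2) + e3 1 1 ⊗ₖ e3 1 1
      + Real.sqrt q • (e3 1 2 ⊗ₖ e3 1 0)
      + e3 2 0 ⊗ₖ e3 0 2 + Real.sqrt q • (e3 2 1 ⊗ₖ e3 0 1)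
      + q • (e3 2 2 ⊗ₖ e3 0 0))

/-- The inverse hyperbolic cosine, `arccosh x = log (x + √(x² - 1))` (for `x ≥ 1`). -/
noncomputable def arccosh (x : ℝ) : ℝ := Real.log (x + Real.sqrt (x ^ 2 - 1))

/-- `η = arccosh((q + q⁻¹ + 1)/2)`. -/
noncomputable def etaSO3 (q : ℝ) : ℝ := arccosh ((q + q⁻¹ + 1) / 2)

/-- The Baxterized `SO_q(3)` braid matrix
`R̂(θ) = I₉ + (sinh(η-θ)/sinh(η+θ) - 1) P₀`. -/
noncomputable def Rso3 (q θ : ℝ) : Matrix (Fin 3 × Fin 3) (Fin 3 × Fin 3) ℝ :=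
  1 + (Real.sinh (etaSO3 q - θ) / Real.sinh (etaSO3 q + θ) - 1) • P0so3 q

/-- `A₁₂ = A ⊗ I₃`, acting on the first two factors of `ℂ³⊗ℂ³⊗ℂ³`. -/
noncomputable def so3op12 (A : Matrix (Fin 3 × Fin 3) (Fin 3 × Fin 3) ℝ) :
    Matrix (Fin 3 × Fin 3 × Fin 3) (Fin 3 × Fin 3 × Fin 3) ℝ :=
  Matrix.reindex (Equiv.prodAssoc (Fin 3) (Fin 3) (Fin 3))
    (Equiv.prodAssoc (Fin 3) (Fin 3) (Fin 3))
    (A ⊗ₖ (1 : Matrix (Fin 3) (Fin 3) ℝ))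

/-- `A₂₃ = I₃ ⊗ A`, acting on the last two factors of `ℂ³⊗ℂ³⊗ℂ³`. -/
noncomputable def so3op23 (A : Matrix (Fin 3 × Fin 3) (Fin 3 × Fin 3) ℝ) :
    Matrix (Fin 3 × Fin 3 × Fin 3) (Fin 3 × Fin 3 × Fin 3) ℝ :=
  (1 : Matrix (Fin 3) (Fin 3) ℝ) ⊗ₖ A

/-!
Write `N = q + q⁻¹ + 1`. The projector is `P₀ = N⁻¹ |u⟩⟨u|`, where `u ∈ ℝ³ ⊗ ℝ³` is the
flattening of a `3 × 3` matrix `U` with `U² = 1` and `|u|² = N`. Hence `e = (N P₀)₁₂` and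
`f = (N P₀)₂₃` satisfy the Temperley–Lieb relations `e² = N e`, `f² = N f`, `e f e = e`,
`f e f = f`, and `R̂(θ) = 1 + c(θ) N P₀` with `c(θ) = -sinh θ / sinh (η + θ)`, using
`N = 2 cosh η`. In a Temperley–Lieb algebra the braid equation for elements `1 + x e`, `1 + y f`
reduces to the single scalar identity `x + z + N x z + x y z = y`, which for `x = c(θ)`,
`y = c(θ + θ')`, `z = c(θ')` is an identity between hyperbolic sines.
-/

open Real

lemma two_mul_cosh_etaSO3 {q : ℝ} (hq : 0 < q) : 2 * cosh (etaSO3 q) = q + q⁻¹ + 1 := by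
  have h_one_le : 1 ≤ (q + q⁻¹ + 1) / 2 := by
    nlinarith [sq_nonneg (q - 1), mul_inv_cancel₀ hq.ne', inv_pos.2 hq]
  rw [etaSO3, show arccosh = arcosh from rfl, cosh_arcosh h_one_le]
  ring

noncomputable def baxterCoeff (η t : ℝ) : ℝ := -sinh t / sinh (η + t)

lemma sinh_sub_div_sinh_add_sub_one {η t : ℝ} (ht : sinh (η + t) ≠ 0) :
    sinh (η - t) / sinh (η + t) - 1 = 2 * cosh η * baxterCoeff η t := by
  rw [baxterCoeff, div_sub_one ht, sinh_sub, sinh_add]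
  field_simp
  ring

lemma sinh_baxter_identity (η a b : ℝ) :
    sinh a * sinh (η + b) * sinh (η + a + b) + sinh b * sinh (η + a) * sinh (η + a + b)
      - 2 * cosh η * sinh a * sinh b * sinh (η + a + b) + sinh a * sinh b * sinh (a + b)
      = sinh (a + b) * sinh (η + a) * sinh (η + b) := by
  simp only [sinh_eq, cosh_eq, exp_add, exp_neg]
  field_simp
  ring

lemma baxterCoeff_add {η a b : ℝ} (ha : sinh (η + a) ≠ 0) (hb : sinh (η + b) ≠ 0)
    (hab : sinh (η + (a + b)) ≠ 0) :
    baxterCoeff η a + baxterCoeff η b + 2 * cosh η * baxterCoeff η a * baxterCoeff η b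
      + baxterCoeff η a * baxterCoeff η (a + b) * baxterCoeff η b = baxterCoeff η (a + b) := by
  unfold baxterCoeff
  rw [← add_assoc] at hab ⊢
  field_simp
  linear_combination (-1) * sinh_baxter_identity η a b

lemma sinh_add_ne_zero {η t : ℝ} (ht : t ≠ -η) : sinh (η + t) ≠ 0 := by
  rw [ne_eq, sinh_eq_zero]
  contrapose! ht
  linarith

theorem yangBaxter_of_temperleyLieb {R A : Type*} [CommRing R] [Ring A] [Algebra R A]
    {e f : A} {N x y z : R} (he : e * e = N • e) (hf : f * f = N • f)
    (hefe : e * f * e = e) (hfef : f * e * f = f) (hxyz : x + z + N * x * z + x * y * z = y) :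
    (1 + x • e) * (1 + y • f) * (1 + z • e) = (1 + z • f) * (1 + y • e) * (1 + x • f) := by
  have hdiff : (1 + x • e) * (1 + y • f) * (1 + z • e) - (1 + z • f) * (1 + y • e) * (1 + x • f)
      = (x + z + N * x * z + x * y * z - y) • (e - f) := by
    simp only [mul_add, add_mul, one_mul, mul_one, smul_mul_assoc, mul_smul_comm, smul_smul,
      he, hf, hefe, hfef]
    match_scalars <;> ring
  rwa [hxyz, sub_self, zero_smul, sub_eq_zero] at hdiff

section rankOne

variable {n R : Type*} [CommSemiring R]

def rankOneOf (U : Matrix n n R) : Matrix (n × n) (n × n) R :=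
  vecMulVec (fun p ↦ U p.1 p.2) (fun p ↦ U p.1 p.2)

lemma rankOneOf_apply (U : Matrix n n R) (a b c d : n) :
    rankOneOf U (a, b) (c, d) = U a b * U c d := rfl

lemma rankOneOf_mul_self [Fintype n] (U : Matrix n n R) :
    rankOneOf U * rankOneOf U = (∑ a, ∑ b, U a b ^ 2) • rankOneOf U := by
  rw [rankOneOf, vecMulVec_mul_vecMulVec, vecMulVec_smul, dotProduct, Fintype.sum_prod_type]
  simp only [sq]

end rankOne

section Operators

variable (A B : Matrix (Fin 3 × Fin 3) (Fin 3 × Fin 3) ℝ)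

lemma so3op12_apply (i j k l m n : Fin 3) :
    so3op12 A (i, j, k) (l, m, n) = A (i, j) (l, m) * (1 : Matrix (Fin 3) (Fin 3) ℝ) k n := rfl

lemma so3op23_apply (i j k l m n : Fin 3) :
    so3op23 A (i, j, k) (l, m, n) = (1 : Matrix (Fin 3) (Fin 3) ℝ) i l * A (j, k) (m, n) := rfl

lemma so3op12_one : so3op12 1 = 1 := by
  rw [so3op12, one_kronecker_one, reindex_apply, submatrix_one_equiv]

lemma so3op12_add : so3op12 (A + B) = so3op12 A + so3op12 B := by
  ext
  simp [so3op12, add_kronecker]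

lemma so3op12_smul (c : ℝ) : so3op12 (c • A) = c • so3op12 A := by
  ext
  simp [so3op12, smul_kronecker]

lemma so3op12_mul : so3op12 A * so3op12 B = so3op12 (A * B) := by
  rw [so3op12, so3op12, so3op12, reindex_apply, reindex_apply, submatrix_mul_equiv,
    ← mul_kronecker_mul, one_mul, reindex_apply]

lemma so3op23_one : so3op23 1 = 1 := one_kronecker_one

lemma so3op23_add : so3op23 (A + B) = so3op23 A + so3op23 B := kronecker_add _ _ _

lemma so3op23_smul (c : ℝ) : so3op23 (c • A) = c • so3op23 A := kronecker_smul _ _ _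

lemma so3op23_mul : so3op23 A * so3op23 B = so3op23 (A * B) := by
  rw [so3op23, so3op23, ← mul_kronecker_mul, one_mul, so3op23]

end Operators

lemma so3op12_mul_so3op23_mul_so3op12 {U : Matrix (Fin 3) (Fin 3) ℝ} (hU : U * U = 1) :
    so3op12 (rankOneOf U) * so3op23 (rankOneOf U) * so3op12 (rankOneOf U)
      = so3op12 (rankOneOf U) := by
  ext ⟨i, j, k⟩ ⟨l, m, n⟩
  calc _ = U i j * U l m * ∑ a, (U * U) a k * (U * U) a n := by
        simp only [mul_apply, Fintype.sum_prod_type, so3op12_apply, so3op23_apply,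
          rankOneOf_apply, one_apply, ite_mul, mul_ite, one_mul, mul_one, zero_mul, mul_zero,
          Finset.sum_ite_eq, Finset.sum_ite_eq', Finset.mem_univ, if_true, Finset.sum_ite_irrel,
          Finset.sum_const_zero]
        simp only [Fin.sum_univ_three]
        ring
    _ = so3op12 (rankOneOf U) (i, j, k) (l, m, n) := by
        simp [hU, one_apply, so3op12_apply, rankOneOf_apply, eq_comm]

lemma so3op23_mul_so3op12_mul_so3op23 {U : Matrix (Fin 3) (Fin 3) ℝ} (hU : U * U = 1) :
    so3op23 (rankOneOf U) * so3op12 (rankOneOf U) * so3op23 (rankOneOf U)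
      = so3op23 (rankOneOf U) := by
  ext ⟨i, j, k⟩ ⟨l, m, n⟩
  calc _ = U j k * U m n * ∑ c, (U * U) i c * (U * U) l c := by
        simp only [mul_apply, Fintype.sum_prod_type, so3op12_apply, so3op23_apply,
          rankOneOf_apply, one_apply, ite_mul, mul_ite, one_mul, mul_one, zero_mul, mul_zero,
          Finset.sum_ite_eq, Finset.sum_ite_eq', Finset.mem_univ, if_true, Finset.sum_ite_irrel,
          Finset.sum_const_zero]
        simp only [Fin.sum_univ_three]
        ring
    _ = so3op23 (rankOneOf U) (i, j, k) (l, m, n) := by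
        simp [hU, one_apply, so3op23_apply, rankOneOf_apply]

noncomputable def Uso3 (q : ℝ) : Matrix (Fin 3) (Fin 3) ℝ :=
  !![0, 0, (√q)⁻¹; 0, 1, 0; √q, 0, 0]

lemma Uso3_mul_self {q : ℝ} (hq : 0 < q) : Uso3 q * Uso3 q = 1 := by
  have hs : √q ≠ 0 := by positivity
  ext i j
  fin_cases i <;> fin_cases j <;> simp [Uso3, mul_apply, Fin.sum_univ_three, hs]

lemma sum_sq_Uso3 {q : ℝ} (hq : 0 ≤ q) : ∑ a, ∑ b, Uso3 q a b ^ 2 = q + q⁻¹ + 1 := by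
  simp [Fin.sum_univ_three, Uso3, sq_sqrt hq]
  ring

lemma P0so3_eq {q : ℝ} (hq : 0 < q) : P0so3 q = (q + q⁻¹ + 1)⁻¹ • rankOneOf (Uso3 q) := by
  have hs : √q * √q = q := mul_self_sqrt hq.le
  have hs0 : √q ≠ 0 := by positivity
  rw [P0so3]
  congr 1
  ext ⟨a, b⟩ ⟨c, d⟩
  fin_cases a <;> fin_cases b <;> fin_cases c <;> fin_cases d <;>
    simp [e3, rankOneOf_apply, Uso3, hs, hs0, ← mul_inv]

lemma Rso3_eq {q t : ℝ} (hq : 0 < q) (ht : t ≠ -etaSO3 q) :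
    Rso3 q t = 1 + baxterCoeff (etaSO3 q) t • rankOneOf (Uso3 q) := by
  have hN : q + q⁻¹ + 1 ≠ 0 := by positivity
  rw [Rso3, sinh_sub_div_sinh_add_sub_one (sinh_add_ne_zero ht), P0so3_eq hq, smul_smul,
    two_mul_cosh_etaSO3 hq, mul_right_comm, mul_inv_cancel₀ hN, one_mul]

/-- the Baxterized braid equation for the new class of `SO_q(3)` braid
matrices with additive spectral parameter. -/
theorem so3_new_class_braid_equation (q : ℝ) (hq : 0 < q) (θ θ' : ℝ)
    (h1 : θ ≠ -etaSO3 q) (h2 : θ' ≠ -etaSO3 q) (h3 : θ + θ' ≠ -etaSO3 q) :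
    so3op12 (Rso3 q θ) * so3op23 (Rso3 q (θ + θ')) * so3op12 (Rso3 q θ') =
      so3op23 (Rso3 q θ') * so3op12 (Rso3 q (θ + θ')) * so3op23 (Rso3 q θ) := by
  have hsq : rankOneOf (Uso3 q) * rankOneOf (Uso3 q)
      = (2 * cosh (etaSO3 q)) • rankOneOf (Uso3 q) := by
    rw [rankOneOf_mul_self, sum_sq_Uso3 hq.le, two_mul_cosh_etaSO3 hq]
  simp only [Rso3_eq hq h1, Rso3_eq hq h2, Rso3_eq hq h3, so3op12_add, so3op12_one,
    so3op12_smul, so3op23_add, so3op23_one, so3op23_smul]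
  refine yangBaxter_of_temperleyLieb ?_ ?_
    (so3op12_mul_so3op23_mul_so3op12 (Uso3_mul_self hq))
    (so3op23_mul_so3op12_mul_so3op23 (Uso3_mul_self hq))
    (baxterCoeff_add (sinh_add_ne_zero h1) (sinh_add_ne_zero h2) (sinh_add_ne_zero h3))
  · rw [so3op12_mul, hsq, so3op12_smul]
  · rw [so3op23_mul, hsq, so3op23_smul]
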